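/- Let M be a matroid with injective weight function w, and let x be the minimum-weight element of some cocircuit C* of M. Then x belongs to the minimum-weight basis of M. -/

import Mathlib

open Set Function

namespace Matroid

variable {α : Type*}

noncomputable def rk (M : Matroid α) (X : Set α) : ℕ :=
  sSup {n | ∃ I, M.Indep I ∧ I ⊆ X ∧ I.ncard = n}

def Circuit' (M : Matroid α) (C : Set α) : Prop :=
  C ⊆ M.E ∧ ¬ M.Indep C ∧ ∀ D, D ⊂ C → M.Indep D

def Cocircuit' (M : Matroid α) (C : Set α) : Prop := M✶.Circuit' C

def Hyperplane' (M : Matroid α) (H : Set α) : Prop :=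
  M.IsFlat H ∧ H ≠ M.E ∧ ∀ F, M.IsFlat F → H ⊂ F → F = M.E

def contract' (M : Matroid α) (C : Set α) : Matroid α := (M✶.restrict (M.E \ C))✶

def delete' (M : Matroid α) (D : Set α) : Matroid α := M.restrict (M.E \ D)

def IsMinor' (N M : Matroid α) : Prop := ∃ C D, N = (M.contract' C).delete' D

def RepF2 (M : Matroid α) : Prop :=
  ∃ (ι : Type) (f : α → (ι → ZMod 2)),
    ∀ I : Set α, I ⊆ M.E → (M.Indep I ↔ LinearIndependent (ZMod 2) (fun x : I => f x))

def IsFreeSet (M : Matroid α) {m : ℕ} (F : Fin m → Set α) : Prop :=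
  (∀ i, M.IsFlat (F i)) ∧
  Function.Injective (fun I : Finset (Fin m) => M.closure (⋃ i ∈ I, F i)) ∧
  ∀ I J : Finset (Fin m),
    M.closure (⋃ i ∈ I, F i) ∩ M.closure (⋃ i ∈ J, F i) = M.closure (⋃ i ∈ I ∩ J, F i)

def IsCofreeSet (M : Matroid α) {m : ℕ} (F : Fin m → Set α) : Prop :=
  (∀ i, M.IsFlat (F i)) ∧
  Function.Injective (fun I : Finset (Fin m) => M.E ∩ ⋂ i ∈ I, F i) ∧
  ∀ I J : Finset (Fin m),
    M.closure ((M.E ∩ ⋂ i ∈ I, F i) ∪ (M.E ∩ ⋂ i ∈ J, F i)) = M.E ∩ ⋂ i ∈ I ∩ J, F i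

def CoversFlat (M : Matroid α) (F F' : Set α) : Prop :=
  M.IsFlat F ∧ M.IsFlat F' ∧ F ⊂ F' ∧
    ∀ G, M.IsFlat G → F ⊆ G → G ⊆ F' → G = F ∨ G = F'

def IsMinWt (w : α → ℝ) (S : Set α) (x : α) : Prop := x ∈ S ∧ ∀ y ∈ S, w x ≤ w y

def IsoU24 (N : Matroid α) : Prop :=
  N.E.ncard = 4 ∧ ∀ X ⊆ N.E, (N.Indep X ↔ X.ncard ≤ 2)

def HasU24Minor (M : Matroid α) : Prop := ∃ N, IsMinor' N M ∧ IsoU24 N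

end Matroid

noncomputable def Sym2.inc {V : Type*} [DecidableEq V] (e : Sym2 V) : V → ZMod 2 :=
  fun v => if v ∈ e then 1 else 0

/-! If `x ∉ B`, the fundamental circuit of `x` in `B` meets the cocircuit `C` in `x`, hence in a
second element `y ∈ B` with `w x < w y`; exchanging `y` for `x` gives a lighter base. -/

namespace Matroid

variable {α : Type*} {M : Matroid α}

theorem circuit'_iff_isCircuit {C : Set α} : M.Circuit' C ↔ M.IsCircuit C := by
  rw [isCircuit_iff_forall_ssubset, dep_iff, Circuit']
  tauto

theorem cocircuit'_iff_isCocircuit {C : Set α} : M.Cocircuit' C ↔ M.IsCocircuit C :=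
  circuit'_iff_isCircuit

theorem IsBase.exists_isBase_insert_sdiff_of_isCocircuit {B C : Set α} {x : α}
    (hB : M.IsBase B) (hC : M.IsCocircuit C) (hxC : x ∈ C) (hxB : x ∉ B) :
    ∃ y ∈ B ∩ C, y ≠ x ∧ M.IsBase (insert x B \ {y}) := by
  have hxE : x ∈ M.E := hC.subset_ground hxC
  have hK : M.IsCircuit (M.fundCircuit x B) := hB.fundCircuit_isCircuit hxE hxB
  obtain ⟨y, ⟨hyK, hyC⟩, hyx⟩ :=
    (hK.isCocircuit_inter_nontrivial hC ⟨x, M.mem_fundCircuit x B, hxC⟩).exists_ne x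
  have hyB : y ∈ B := by simpa [hyx] using M.fundCircuit_subset_insert x B hyK
  refine ⟨y, ⟨hyB, hyC⟩, hyx, hB.exchange_isBase_of_indep' hyB hxB ?_⟩
  exact (hB.indep.mem_fundCircuit_iff (by rwa [hB.closure_eq]) hxB).1 hyK

end Matroid

theorem finsum_mem_insert_sdiff_singleton_add {α M : Type*} [AddCommMonoid M] {f : α → M}
    {s : Set α} {a b : α} (hs : s.Finite) (ha : a ∉ s) (hb : b ∈ s) :
    ∑ᶠ i ∈ insert a s \ {b}, f i + f b = ∑ᶠ i ∈ s, f i + f a := by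
  have hab : a ≠ b := ne_of_mem_of_not_mem hb ha |>.symm
  have hsb : (s \ {b}).Finite := hs.subset sdiff_subset
  have hsum : ∑ᶠ i ∈ s, f i = f b + ∑ᶠ i ∈ s \ {b}, f i := by
    rw [← finsum_mem_insert _ (fun h => h.2 rfl) hsb, insert_sdiff_self_of_mem hb]
  rw [← insert_sdiff_singleton_comm hab, finsum_mem_insert _ (fun h => ha h.1) hsb, hsum]
  abel

theorem cocircuit_min_in_optimal_base {α : Type*} (M : Matroid α) [M.Finite]
    (w : α → ℝ) (hw : Function.Injective w) (C : Set α) (hC : M.Cocircuit' C)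
    (x : α) (hx : Matroid.IsMinWt w C x) :
    ∀ B, M.IsBase B → (∀ B', M.IsBase B' → ∑ᶠ y ∈ B, w y ≤ ∑ᶠ y ∈ B', w y) → x ∈ B := by
  intro B hB hmin
  by_contra hxB
  obtain ⟨y, ⟨hyB, hyC⟩, hyx, hB'⟩ :=
    hB.exists_isBase_insert_sdiff_of_isCocircuit (Matroid.cocircuit'_iff_isCocircuit.1 hC) hx.1 hxB
  have hwxy : w x < w y := (hx.2 y hyC).lt_of_ne (hw.ne hyx.symm)
  have hswap :=
    finsum_mem_insert_sdiff_singleton_add (f := w) (M.set_finite B hB.subset_ground) hxB hyB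
  linarith [hmin _ hB']
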